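/- Let 0 < ε < 1/2, let M ≥ 1 be an integer, set c = 1/(1+2ε) and b_n = 1/2 − (n−1)(1/2+ε)/M for 1 ≤ n ≤ M+1. Then there exist a constant C > 0 and ρ₀ > 0 such that for every ρ ≥ ρ₀, with k_F = √(4πρ), and every 1 ≤ n ≤ M, (2π)^{−4} ∫∫ over {(k,l) ∈ ℝ² × ℝ² : |k| ≤ k_F, |l| ≥ k_F, |k − l| < ρ^ε, ρ^{−b_n} ≤ |l| − |k| < ρ^{−b_{n+1}}} of (|l|² − |k|²)^{−2} dl dk ≤ C · ρ^{−1/2 + ε} · (ρ^{1/(cM)} − ρ^{1/(2cM)}). (This is the key phase-cancellation estimate behind (2.54): after one partial integration, the contribution of the non-stationary shell 𝔖_n carries an energy denominator (E_l − E_k)^{−2}, and on 𝔖_n one has |l|² − |k|² ≥ k_F ρ^{−b_n}.) -/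

import Mathlib

open MeasureTheory Real

section Auxiliary

open Set


lemma sliceSetMeasurable (R1 R2 r : ℝ) :
    MeasurableSet {p : ℝ × ℝ | |p.1| < r ∧ R1 ≤ Real.sqrt (p.1^2 + p.2^2) ∧
      Real.sqrt (p.1^2 + p.2^2) ≤ R2} := by
  have hs : Measurable fun p : ℝ × ℝ => Real.sqrt (p.1^2 + p.2^2) :=
    Real.continuous_sqrt.measurable.comp
      ((measurable_fst.pow_const 2).add (measurable_snd.pow_const 2))
  exact (measurableSet_lt measurable_fst.abs measurable_const).inter
    ((measurableSet_le measurable_const hs).inter (measurableSet_le hs measurable_const))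

lemma sliceR2 (R1 R2 r : ℝ) (hR1 : 0 < R1) (h12 : R1 ≤ R2) (h2 : R2 ≤ 2*R1)
    (hr0 : 0 < r) (hr : r ≤ R1/2) :
    volume {p : ℝ × ℝ | |p.1| < r ∧ R1 ≤ Real.sqrt (p.1^2 + p.2^2) ∧
      Real.sqrt (p.1^2 + p.2^2) ≤ R2} ≤ ENNReal.ofReal (24 * r * (R2 - R1)) := by
  set T := {p : ℝ × ℝ | |p.1| < r ∧ R1 ≤ Real.sqrt (p.1^2 + p.2^2) ∧
      Real.sqrt (p.1^2 + p.2^2) ≤ R2} with hT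
  have hmeas := sliceSetMeasurable R1 R2 r
  rw [Measure.volume_eq_prod, Measure.prod_apply hmeas]
  have key : ∀ x : ℝ, volume (Prod.mk x ⁻¹' T) ≤
      (Set.Ioo (-r) r).indicator (fun _ => ENNReal.ofReal (12 * (R2 - R1))) x := by
    intro x
    by_cases hx : |x| < r
    · have hxm : x ∈ Set.Ioo (-r) r := abs_lt.mp hx |> fun h => ⟨h.1, h.2⟩
      rw [Set.indicator_of_mem hxm]
      set c := Real.sqrt (R1^2 - x^2) with hc
      set Cc := Real.sqrt (R2^2 - x^2) with hCc
      have hx2 : x^2 ≤ (R1/2)^2 := by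
        have : |x| ≤ R1/2 := le_trans hx.le hr
        nlinarith [abs_nonneg x, sq_abs x]
      have hR1x : 0 ≤ R1^2 - x^2 := by nlinarith
      have hc2 : c^2 = R1^2 - x^2 := Real.sq_sqrt hR1x
      have hcl : R1/2 ≤ c := by
        rw [hc, show R1/2 = Real.sqrt ((R1/2)^2) from (Real.sqrt_sq (by linarith)).symm]
        exact Real.sqrt_le_sqrt (by nlinarith)
      have hc0 : 0 ≤ c := Real.sqrt_nonneg _
      have hCcle : Cc ≤ c + 6*(R2 - R1) := by
        rw [hCc, show c + 6*(R2-R1) = Real.sqrt ((c + 6*(R2-R1))^2) from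
          (Real.sqrt_sq (by nlinarith)).symm]
        exact Real.sqrt_le_sqrt (by nlinarith)
      have hsub : Prod.mk x ⁻¹' T ⊆ Set.Icc (-Cc) (-c) ∪ Set.Icc c Cc := by
        rintro y ⟨-, h1, h2⟩
        have hsum : 0 ≤ x^2 + y^2 := by positivity
        have hA : R1^2 ≤ x^2 + y^2 := by
          have := Real.sq_sqrt hsum
          nlinarith [Real.sqrt_nonneg (x^2+y^2)]
        have hB : x^2 + y^2 ≤ R2^2 := by
          have := Real.sq_sqrt hsum
          nlinarith [Real.sqrt_nonneg (x^2+y^2)]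
        have hyl : c ≤ |y| := by
          rw [hc, ← Real.sqrt_sq_eq_abs]
          exact Real.sqrt_le_sqrt (by nlinarith)
        have hyu : |y| ≤ Cc := by
          rw [← Real.sqrt_sq_eq_abs, hCc]
          exact Real.sqrt_le_sqrt (by nlinarith)
        rcases le_or_gt 0 y with hy | hy
        · right
          rw [abs_of_nonneg hy] at hyl hyu
          exact ⟨hyl, hyu⟩
        · left
          rw [abs_of_neg hy] at hyl hyu
          constructor <;> linarith
      calc volume (Prod.mk x ⁻¹' T) ≤ volume (Set.Icc (-Cc) (-c) ∪ Set.Icc c Cc) :=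
            measure_mono hsub
        _ ≤ volume (Set.Icc (-Cc) (-c)) + volume (Set.Icc c Cc) := measure_union_le _ _
        _ = ENNReal.ofReal (Cc - c) + ENNReal.ofReal (Cc - c) := by
            rw [Real.volume_Icc, Real.volume_Icc]; ring_nf
        _ ≤ ENNReal.ofReal (6*(R2-R1)) + ENNReal.ofReal (6*(R2-R1)) := by
            gcongr <;> linarith
        _ = ENNReal.ofReal (12 * (R2 - R1)) := by
            rw [← ENNReal.ofReal_add (by linarith) (by linarith)]; ring_nf
    · have hempty : Prod.mk x ⁻¹' T = ∅ := by
        ext y; simp only [Set.mem_preimage, Set.mem_empty_iff_false, iff_false, hT,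
          Set.mem_setOf_eq]
        rintro ⟨h, -⟩; exact hx h
      rw [hempty]
      simp
  calc ∫⁻ x, volume (Prod.mk x ⁻¹' T) ≤
      ∫⁻ x, (Set.Ioo (-r) r).indicator (fun _ => ENNReal.ofReal (12 * (R2 - R1))) x :=
        lintegral_mono key
    _ = ENNReal.ofReal (12 * (R2 - R1)) * volume (Set.Ioo (-r) r) := by
        rw [lintegral_indicator measurableSet_Ioo, setLIntegral_const]
    _ = ENNReal.ofReal (24 * r * (R2 - R1)) := by
        rw [Real.volume_Ioo, ← ENNReal.ofReal_mul (by linarith)]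
        ring_nf

lemma euclidean_norm_two (v : EuclideanSpace ℝ (Fin 2)) :
    ‖v‖ = Real.sqrt ((v 0)^2 + (v 1)^2) := by
  rw [EuclideanSpace.norm_eq]
  simp [Fin.sum_univ_two, sq_abs]

lemma chord_vol (k : EuclideanSpace ℝ (Fin 2)) (hk : k ≠ 0) (R1 R2 r : ℝ)
    (hR1 : 0 < R1) (h12 : R1 ≤ R2) (h2 : R2 ≤ 2*R1) (hr0 : 0 < r) (hr : r ≤ R1/2) :
    volume {l : EuclideanSpace ℝ (Fin 2) | R1 ≤ ‖l‖ ∧ ‖l‖ ≤ R2 ∧ ‖k - l‖ < r} ≤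
      ENNReal.ofReal (24 * r * (R2 - R1)) := by
  classical
  set u : EuclideanSpace ℝ (Fin 2) := (‖k‖⁻¹ : ℝ) • k with hu_def
  have hu : ‖u‖ = 1 := norm_smul_inv_norm hk
  have hv : Orthonormal ℝ (Set.restrict {1} (fun _ : Fin 2 => u)) := by
    constructor
    · intro i; exact hu
    · intro i j hij
      exact absurd (Subtype.ext (i.2.trans j.2.symm)) hij
  obtain ⟨b, hb⟩ := hv.exists_orthonormalBasis_extension_of_card_eq
    (by simp [finrank_euclideanSpace])
  have hb1 : b 1 = u := hb 1 rfl
  have hinner_k : inner ℝ (b 0) k = (0 : ℝ) := by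
    have h01 : inner ℝ (b 0) (b 1) = (0 : ℝ) := b.orthonormal.2 (show (0:Fin 2) ≠ 1 by decide)
    have hk' : k = ‖k‖ • u := by
      rw [hu_def, smul_smul, mul_inv_cancel₀ (norm_ne_zero_iff.2 hk), one_smul]
    rw [hk', real_inner_smul_right, ← hb1, h01, mul_zero]
  set F : EuclideanSpace ℝ (Fin 2) → ℝ × ℝ :=
    (MeasurableEquiv.finTwoArrow ∘ (MeasurableEquiv.toLp 2 (Fin 2 → ℝ)).symm) ∘ b.repr with hF
  have mp : MeasurePreserving F volume volume :=
    ((volume_preserving_finTwoArrow ℝ).comp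
      (EuclideanSpace.volume_preserving_symm_measurableEquiv_toLp (Fin 2))).comp
      b.measurePreserving_repr
  have hFapp : ∀ l, F l = ((b.repr l) 0, (b.repr l) 1) := by
    intro l
    simp [hF, MeasurableEquiv.finTwoArrow]
  set T := {p : ℝ × ℝ | |p.1| < r ∧ R1 ≤ Real.sqrt (p.1^2 + p.2^2) ∧
      Real.sqrt (p.1^2 + p.2^2) ≤ R2} with hT
  have hsub : {l : EuclideanSpace ℝ (Fin 2) | R1 ≤ ‖l‖ ∧ ‖l‖ ≤ R2 ∧ ‖k - l‖ < r} ⊆ F ⁻¹' T := by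
    rintro l ⟨h1, h2', h3⟩
    have hnorm : ‖l‖ = Real.sqrt (((b.repr l) 0)^2 + ((b.repr l) 1)^2) := by
      rw [← b.repr.norm_map l, euclidean_norm_two]
    have habs : |(b.repr l) 0| < r := by
      have h0 : (b.repr l) 0 = (inner ℝ (b 0) l : ℝ) := b.repr_apply_apply l 0
      have hsplit : (inner ℝ (b 0) l : ℝ) = (inner ℝ (b 0) (l - k) : ℝ) + (inner ℝ (b 0) k : ℝ) := by
        rw [inner_sub_right]; ring
      rw [h0, hsplit, hinner_k, add_zero]
      have hle : |(inner ℝ (b 0) (l - k) : ℝ)| ≤ ‖b 0‖ * ‖l - k‖ := abs_real_inner_le_norm _ _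
      rw [b.orthonormal.1 0, one_mul, norm_sub_rev] at hle
      exact lt_of_le_of_lt hle h3
    simp only [Set.mem_preimage, hFapp, hT, Set.mem_setOf_eq]
    exact ⟨habs, by rw [← hnorm]; exact h1, by rw [← hnorm]; exact h2'⟩
  calc volume {l : EuclideanSpace ℝ (Fin 2) | R1 ≤ ‖l‖ ∧ ‖l‖ ≤ R2 ∧ ‖k - l‖ < r}
      ≤ volume (F ⁻¹' T) := measure_mono hsub
    _ = volume T := mp.measure_preimage (sliceSetMeasurable R1 R2 r).nullMeasurableSet
    _ ≤ ENNReal.ofReal (24 * r * (R2 - R1)) := sliceR2 R1 R2 r hR1 h12 h2 hr0 hr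

end Auxiliary

/-- The exponents `b_n = 1/2 − (n−1)(1/2+ε)/M`. -/
noncomputable def bExp (ε : ℝ) (M : ℕ) (n : ℕ) : ℝ :=
  1/2 - ((n : ℝ) - 1) * (1/2 + ε) / M

/-- The constant `c = 1/(1+2ε)` (so that `2c = (1/2+ε)⁻¹`). -/
noncomputable def cVal (ε : ℝ) : ℝ := 1 / (1 + 2 * ε)


section ArithAux

private lemma auxPi : (1:ℝ) ≤ Real.pi := by linarith [Real.pi_gt_three]

private lemma auxQ {x y z : ℝ} (h : x ≤ y) (hz : 0 ≤ z) : (x + 1 - 1) * z ≤ z * y := by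
  nlinarith

private lemma auxSq {r p : ℝ} (h : r^2 ≤ p) (hp : 0 ≤ p) : (2*r)^2 ≤ 4 * Real.pi * p := by
  nlinarith [auxPi]

private lemma auxSqrt {a b : ℝ} (h : a^2 ≤ b^2) (ha : 0 ≤ a) (hb : 0 ≤ b) : a ≤ b := by
  nlinarith

private lemma auxD {m e : ℝ} (hm : 0 < m) (he : 0 < e) : 1 * m ≤ (1/2 + e) * (2 * m) := by
  nlinarith

private lemma auxAnn {p a b : ℝ} (hp : 0 ≤ p) :
    a^2 * p - (a - b)^2 * p ≤ 2 * p * a * b := by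
  nlinarith [mul_nonneg hp (sq_nonneg b)]

private lemma auxMulPi {x : ℝ} (hx : 0 ≤ x) : x ≤ 4 * Real.pi * x := by
  nlinarith [auxPi]

private lemma auxXX {x : ℝ} (h : 2 ≤ x) : x * x ≤ 2 * (x * x - x) := by nlinarith

end ArithAux

set_option maxHeartbeats 2000000 in
/-- The key phase-cancellation estimate behind (2.54): after one partial integration, the
contribution of the non-stationary shell `𝔖_n` carries an energy denominator
`(E_l − E_k)^{−2} = (|l|² − |k|²)^{−2}`, and
`(2π)^{−4} ∫∫_{𝔖_n} (|l|² − |k|²)^{−2} ≤ C ρ^{−1/2+ε}(ρ^{1/(cM)} − ρ^{1/(2cM)})`. -/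
theorem shell_energy_denominator_bound
    (ε : ℝ) (hε0 : 0 < ε) (hε : ε < 1/2) (M : ℕ) (hM : 1 ≤ M) :
    ∃ C : ℝ, 0 < C ∧ ∃ ρ₀ : ℝ, 0 < ρ₀ ∧ ∀ ρ : ℝ, ρ₀ ≤ ρ →
      ∀ n : ℕ, 1 ≤ n → n ≤ M →
      ((2 * π) ^ (4:ℕ))⁻¹ *
        (∫ k in {k : EuclideanSpace ℝ (Fin 2) | ‖k‖ ≤ Real.sqrt (4 * π * ρ)},
          ∫ l in {l : EuclideanSpace ℝ (Fin 2) |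
              Real.sqrt (4 * π * ρ) ≤ ‖l‖ ∧ ‖k - l‖ < ρ ^ ε ∧
              ρ ^ (-(bExp ε M n)) ≤ ‖l‖ - ‖k‖ ∧ ‖l‖ - ‖k‖ < ρ ^ (-(bExp ε M (n+1)))},
            ((‖l‖ ^ 2 - ‖k‖ ^ 2) ^ 2)⁻¹)
        ≤ C * ρ ^ (-(1/2) + ε) *
            (ρ ^ (1 / (cVal ε * M)) - ρ ^ (1 / (2 * cVal ε * M))) := by
  classical
  have hπ : (1:ℝ) ≤ π := auxPi
  refine ⟨96 * π * (((2*π) ^ (4:ℕ))⁻¹), by positivity, (2:ℝ)^(2*M), by positivity, ?_⟩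
  intro ρ hρ n hn1 hnM
  set C : ℝ := 96 * π * (((2*π) ^ (4:ℕ))⁻¹) with hC
  have hM0 : (0:ℝ) < M := by exact_mod_cast hM
  have hρ1 : (1:ℝ) ≤ ρ := le_trans (one_le_pow₀ (by norm_num)) hρ
  have hρ0 : (0:ℝ) < ρ := lt_of_lt_of_le one_pos hρ1
  set d : ℝ := (1/2 + ε) / M with hd_def
  have hd0 : 0 < d := by positivity
  set kF := Real.sqrt (4 * π * ρ) with hkF_def
  set r := ρ ^ ε with hr_def
  set t := ρ ^ (-(bExp ε M n)) with ht_def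
  set w := ρ ^ (-(bExp ε M (n+1))) with hw_def
  -- exponent facts
  have hbn1 : -(bExp ε M (n+1)) ≤ ε := by
    have hnM' : (n:ℝ) ≤ M := by exact_mod_cast hnM
    have hq : ((n:ℝ) + 1 - 1) * (1/2 + ε) / M ≤ 1/2 + ε := by
      rw [div_le_iff₀ hM0]; exact auxQ hnM' (by linarith)
    simp only [bExp]; push_cast; linarith
  have hw_le_r : w ≤ r := Real.rpow_le_rpow_of_exponent_le hρ1 hbn1
  have hr_pos : 0 < r := Real.rpow_pos_of_pos hρ0 _
  have hw_pos : 0 < w := Real.rpow_pos_of_pos hρ0 _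
  have ht_pos : 0 < t := Real.rpow_pos_of_pos hρ0 _
  have hkF_pos : 0 < kF := Real.sqrt_pos.2 (by positivity)
  have hkF2 : kF^2 = 4*π*ρ := Real.sq_sqrt (by positivity)
  have hr2 : r^2 ≤ ρ := by
    have e : r^2 = ρ ^ (ε*2) := by
      rw [hr_def, ← Real.rpow_natCast (ρ ^ ε) 2, ← Real.rpow_mul hρ0.le]
      norm_num
    calc r^2 = ρ ^ (ε*2) := e
      _ ≤ ρ ^ (1:ℝ) := Real.rpow_le_rpow_of_exponent_le hρ1 (by linarith)
      _ = ρ := Real.rpow_one ρ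
  have hr_le : r ≤ kF/2 := by
    have h1 : (2*r)^2 ≤ kF^2 := by rw [hkF2]; exact auxSq hr2 hρ0.le
    have h2 : 2*r ≤ kF := auxSqrt h1 (by linarith) hkF_pos.le
    linarith
  have hw_le : w ≤ kF/2 := le_trans hw_le_r hr_le
  have h2d : (2:ℝ) ≤ ρ ^ d := by
    have e1 : ((2:ℝ)^(2*M)) ^ (1/(2*(M:ℝ))) = 2 := by
      rw [← Real.rpow_natCast 2 (2*M), ← Real.rpow_mul (by norm_num)]
      push_cast
      rw [show (2*(M:ℝ)) * (1/(2*(M:ℝ))) = 1 by field_simp, Real.rpow_one]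
    have h1 : (2:ℝ) ≤ ρ ^ (1/(2*(M:ℝ))) := by
      calc (2:ℝ) = ((2:ℝ)^(2*M)) ^ (1/(2*(M:ℝ))) := e1.symm
        _ ≤ ρ ^ (1/(2*(M:ℝ))) := Real.rpow_le_rpow (by positivity) hρ (by positivity)
    refine le_trans h1 (Real.rpow_le_rpow_of_exponent_le hρ1 ?_)
    rw [hd_def, div_le_div_iff₀ (by positivity) hM0]
    exact auxD hM0 hε0
  -- sets
  set D := {k : EuclideanSpace ℝ (Fin 2) | ‖k‖ ≤ kF} with hD
  have measD : MeasurableSet D := measurableSet_le measurable_norm measurable_const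
  have hDball : D = Metric.closedBall 0 kF := by
    ext k; simp [hD, Metric.mem_closedBall, dist_zero_right]
  have volD_lt : volume D < ⊤ := by rw [hDball]; exact measure_closedBall_lt_top
  set g : EuclideanSpace ℝ (Fin 2) → ℝ := fun k =>
    ∫ l in {l : EuclideanSpace ℝ (Fin 2) |
        kF ≤ ‖l‖ ∧ ‖k - l‖ < r ∧ t ≤ ‖l‖ - ‖k‖ ∧ ‖l‖ - ‖k‖ < w},
      ((‖l‖ ^ 2 - ‖k‖ ^ 2) ^ 2)⁻¹ with hg_def
  set B := ((t*kF)^2)⁻¹ * (24*r*w) with hB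
  have hB_nonneg : 0 ≤ B := by positivity
  have hg_zero : ∀ k : EuclideanSpace ℝ (Fin 2), ‖k‖ < kF - w → g k = 0 := by
    intro k hk
    have hempty : {l : EuclideanSpace ℝ (Fin 2) |
        kF ≤ ‖l‖ ∧ ‖k - l‖ < r ∧ t ≤ ‖l‖ - ‖k‖ ∧ ‖l‖ - ‖k‖ < w} = ∅ := by
      ext l
      simp only [Set.mem_setOf_eq, Set.mem_empty_iff_false, iff_false, not_and]
      intro h1 _ _
      intro h4; linarith
    simp only [hg_def, hempty, Measure.restrict_empty, integral_zero_measure]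
  have hg_le : ∀ k ∈ D, kF - w ≤ ‖k‖ → g k ≤ B := by
    intro k hkD hk_ann
    have hkD' : ‖k‖ ≤ kF := hkD
    have hk0 : k ≠ 0 := by
      have : 0 < ‖k‖ := by linarith
      exact norm_pos_iff.1 this
    have hchord : volume {l : EuclideanSpace ℝ (Fin 2) |
        kF ≤ ‖l‖ ∧ ‖k - l‖ < r ∧ t ≤ ‖l‖ - ‖k‖ ∧ ‖l‖ - ‖k‖ < w} ≤
        ENNReal.ofReal (24*r*w) := by
      have hsub : {l : EuclideanSpace ℝ (Fin 2) |
          kF ≤ ‖l‖ ∧ ‖k - l‖ < r ∧ t ≤ ‖l‖ - ‖k‖ ∧ ‖l‖ - ‖k‖ < w} ⊆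
          {l : EuclideanSpace ℝ (Fin 2) | kF ≤ ‖l‖ ∧ ‖l‖ ≤ kF + w ∧ ‖k - l‖ < r} := by
        rintro l ⟨h1, h2, h3, h4⟩; exact ⟨h1, by linarith, h2⟩
      have h24 : 24*r*((kF+w) - kF) = 24*r*w := by ring
      refine le_trans (measure_mono hsub) ?_
      rw [← h24]
      exact chord_vol k hk0 kF (kF+w) r hkF_pos (by linarith) (by linarith) hr_pos hr_le
    have hvol_fin : volume {l : EuclideanSpace ℝ (Fin 2) |
        kF ≤ ‖l‖ ∧ ‖k - l‖ < r ∧ t ≤ ‖l‖ - ‖k‖ ∧ ‖l‖ - ‖k‖ < w} < ⊤ :=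
      lt_of_le_of_lt hchord ENNReal.ofReal_lt_top
    have hSmeas : MeasurableSet {l : EuclideanSpace ℝ (Fin 2) |
        kF ≤ ‖l‖ ∧ ‖k - l‖ < r ∧ t ≤ ‖l‖ - ‖k‖ ∧ ‖l‖ - ‖k‖ < w} := by
      have h1 : Measurable fun l : EuclideanSpace ℝ (Fin 2) => ‖l‖ := measurable_norm
      have h2 : Measurable fun l : EuclideanSpace ℝ (Fin 2) => ‖k - l‖ :=
        (continuous_const.sub continuous_id).norm.measurable
      exact (measurableSet_le measurable_const h1).inter
        ((measurableSet_lt h2 measurable_const).inter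
        ((measurableSet_le measurable_const (h1.sub measurable_const)).inter
          (measurableSet_lt (h1.sub measurable_const) measurable_const)))
    have hpt : ∀ l ∈ {l : EuclideanSpace ℝ (Fin 2) |
        kF ≤ ‖l‖ ∧ ‖k - l‖ < r ∧ t ≤ ‖l‖ - ‖k‖ ∧ ‖l‖ - ‖k‖ < w},
        ‖((‖l‖ ^ 2 - ‖k‖ ^ 2) ^ 2)⁻¹‖ ≤ ((t*kF)^2)⁻¹ := by
      rintro l ⟨h1, h2, h3, h4⟩
      have hfac : t * kF ≤ ‖l‖^2 - ‖k‖^2 := by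
        have e : ‖l‖^2 - ‖k‖^2 = (‖l‖ - ‖k‖) * (‖l‖ + ‖k‖) := by ring
        rw [e]
        have hb : kF ≤ ‖l‖ + ‖k‖ := by linarith [norm_nonneg k]
        exact mul_le_mul h3 hb hkF_pos.le (by linarith)
      have hpos : 0 < t * kF := by positivity
      rw [Real.norm_eq_abs, abs_of_nonneg (by positivity)]
      exact inv_anti₀ (by positivity) (pow_le_pow_left₀ hpos.le hfac 2)
    have hnorm := norm_setIntegral_le_of_norm_le_const hvol_fin hpt
    have htoReal : (volume {l : EuclideanSpace ℝ (Fin 2) |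
        kF ≤ ‖l‖ ∧ ‖k - l‖ < r ∧ t ≤ ‖l‖ - ‖k‖ ∧ ‖l‖ - ‖k‖ < w}).toReal ≤ 24*r*w :=
      ENNReal.toReal_le_of_le_ofReal (by positivity) hchord
    calc g k ≤ ‖g k‖ := le_abs_self _
      _ ≤ ((t*kF)^2)⁻¹ * (volume {l : EuclideanSpace ℝ (Fin 2) |
            kF ≤ ‖l‖ ∧ ‖k - l‖ < r ∧ t ≤ ‖l‖ - ‖k‖ ∧ ‖l‖ - ‖k‖ < w}).toReal := hnorm
      _ ≤ ((t*kF)^2)⁻¹ * (24*r*w) := by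
          exact mul_le_mul_of_nonneg_left htoReal (by positivity)
      _ = B := hB.symm
  -- indicator comparison
  set A := {k : EuclideanSpace ℝ (Fin 2) | kF - w ≤ ‖k‖} with hA
  have measA : MeasurableSet A := measurableSet_le measurable_const measurable_norm
  have hInt_h : IntegrableOn (A.indicator fun _ => B) D volume :=
    (integrableOn_const volD_lt.ne).indicator measA
  have hgh : ∀ k ∈ D, g k ≤ A.indicator (fun _ => B) k := by
    intro k hkD
    by_cases hk : kF - w ≤ ‖k‖
    · have hkA : k ∈ A := hk
      rw [Set.indicator_of_mem hkA]
      exact hg_le k hkD hk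
    · have hkA : k ∉ A := hk
      rw [Set.indicator_of_notMem hkA, hg_zero k (lt_of_not_ge hk)]
  -- RHS nonneg facts
  have hcexp1 : 1 / (cVal ε * M) = 2*d := by
    rw [hd_def]; unfold cVal; field_simp
  have hcexp2 : 1 / (2 * cVal ε * M) = d := by
    rw [hd_def]; unfold cVal; field_simp
  have hsplit : ρ^(2*d) = ρ^d * ρ^d := by
    rw [← Real.rpow_add hρ0]; congr 1; ring
  by_cases hg : IntegrableOn g D volume
  · have hmono : ∫ k in D, g k ≤ ∫ k in D, A.indicator (fun _ => B) k :=
      setIntegral_mono_on hg hInt_h measD hgh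
    have hint_h : ∫ k in D, A.indicator (fun _ => B) k = B * (volume (D ∩ A)).toReal := by
      rw [setIntegral_indicator measA, setIntegral_const, smul_eq_mul, mul_comm]; rfl
    have hvolDA : (volume (D ∩ A)).toReal ≤ 2*π*kF*w := by
      have hsub2 : D ∩ A ⊆ Metric.closedBall (0 : EuclideanSpace ℝ (Fin 2)) kF \
          Metric.ball 0 (kF - w) := by
        rintro k ⟨hk1, hk2⟩
        refine ⟨mem_closedBall_zero_iff.2 hk1, fun hmem => ?_⟩
        rw [mem_ball_zero_iff] at hmem
        have : kF - w ≤ ‖k‖ := hk2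
        linarith
      have hballsub : Metric.ball (0 : EuclideanSpace ℝ (Fin 2)) (kF - w) ⊆
          Metric.closedBall 0 kF :=
        Metric.ball_subset_closedBall.trans (Metric.closedBall_subset_closedBall (by linarith))
      have hdiff : volume (Metric.closedBall (0 : EuclideanSpace ℝ (Fin 2)) kF \
          Metric.ball 0 (kF - w)) =
          volume (Metric.closedBall (0 : EuclideanSpace ℝ (Fin 2)) kF) -
          volume (Metric.ball (0 : EuclideanSpace ℝ (Fin 2)) (kF - w)) :=
        measure_diff hballsub measurableSet_ball.nullMeasurableSet measure_ball_lt_top.ne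
      have hΓ : Real.Gamma ((Fintype.card (Fin 2) : ℝ) / 2 + 1) = 1 := by
        norm_num [Real.Gamma_two]
      have hcb : volume (Metric.closedBall (0 : EuclideanSpace ℝ (Fin 2)) kF) =
          ENNReal.ofReal (kF^2 * π) := by
        rw [EuclideanSpace.volume_closedBall, hΓ]
        rw [Fintype.card_fin, Real.sq_sqrt Real.pi_pos.le]
        rw [← ENNReal.ofReal_pow hkF_pos.le, ← ENNReal.ofReal_mul (by positivity)]
        norm_num
      have hball : volume (Metric.ball (0 : EuclideanSpace ℝ (Fin 2)) (kF - w)) =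
          ENNReal.ofReal ((kF - w)^2 * π) := by
        rw [EuclideanSpace.volume_ball, hΓ]
        rw [Fintype.card_fin, Real.sq_sqrt Real.pi_pos.le]
        rw [← ENNReal.ofReal_pow (by linarith : (0:ℝ) ≤ kF - w),
          ← ENNReal.ofReal_mul (by positivity)]
        norm_num
      have hbound : volume (D ∩ A) ≤ ENNReal.ofReal (2*π*kF*w) := by
        refine le_trans (measure_mono hsub2) ?_
        rw [hdiff, hcb, hball, ← ENNReal.ofReal_sub _ (by positivity)]
        apply ENNReal.ofReal_le_ofReal
        have := auxAnn (p := π) (a := kF) (b := w) Real.pi_pos.le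
        linarith
      exact ENNReal.toReal_le_of_le_ofReal (by positivity) hbound
    have hfinal1 : ∫ k in D, g k ≤ B * (2*π*kF*w) := by
      refine le_trans hmono ?_
      rw [hint_h]
      exact mul_le_mul_of_nonneg_left hvolDA hB_nonneg
    -- arithmetic endgame
    have hB_eq : B * (2*π*kF*w) = 48*π * ((t^2)⁻¹ * kF⁻¹ * r * w^2) := by
      rw [hB]; field_simp; ring
    have hkF_inv : kF⁻¹ ≤ ρ ^ (-(1/2) : ℝ) := by
      have h1 : ρ ^ ((1/2):ℝ) ≤ kF := by
        rw [← Real.sqrt_eq_rpow, hkF_def]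
        exact Real.sqrt_le_sqrt (auxMulPi hρ0.le)
      rw [Real.rpow_neg hρ0.le]
      exact inv_anti₀ (Real.rpow_pos_of_pos hρ0 _) h1
    have ht2 : (t^2)⁻¹ = ρ ^ (2 * bExp ε M n) := by
      rw [ht_def, ← Real.rpow_natCast (ρ ^ (-(bExp ε M n))) 2, ← Real.rpow_mul hρ0.le,
        ← Real.rpow_neg hρ0.le]
      congr 1; push_cast; ring
    have hw2 : w^2 = ρ ^ (-(2 * bExp ε M (n+1))) := by
      rw [hw_def, ← Real.rpow_natCast (ρ ^ (-(bExp ε M (n+1)))) 2, ← Real.rpow_mul hρ0.le]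
      congr 1; push_cast; ring
    have hexp_eq : 2*bExp ε M n + (-(1/2)) + ε + -(2*bExp ε M (n+1)) = (-(1/2)+ε) + 2*d := by
      simp only [bExp, hd_def]
      push_cast
      field_simp
      ring
    have hL : (ρ ^ (2*bExp ε M n)) * (ρ ^ (-(1/2):ℝ)) * (ρ^ε) * (ρ ^ (-(2*bExp ε M (n+1)))) =
        ρ ^ (2*bExp ε M n + (-(1/2)) + ε + -(2*bExp ε M (n+1))) := by
      simp only [Real.rpow_add hρ0]
    have hcomb : 48*π * ((t^2)⁻¹ * (ρ ^ (-(1/2):ℝ)) * r * w^2) =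
        48*π * (ρ ^ (-(1/2) + ε) * ρ^(2*d)) := by
      rw [ht2, hw2, hr_def, hL, hexp_eq, Real.rpow_add hρ0]
    have hmono2 : 48*π * ((t^2)⁻¹ * kF⁻¹ * r * w^2) ≤
        48*π * ((t^2)⁻¹ * (ρ ^ (-(1/2):ℝ)) * r * w^2) := by
      gcongr
    have hchain : ∫ k in D, g k ≤ 48*π * (ρ ^ (-(1/2) + ε) * ρ^(2*d)) := by
      rw [← hcomb]
      exact le_trans hfinal1 (by rw [hB_eq]; exact hmono2)
    rw [hcexp1, hcexp2]
    have hP : (0:ℝ) < ((2*π) ^ (4:ℕ))⁻¹ := by positivity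
    have hX : (0:ℝ) < ρ ^ (-(1/2) + ε) := Real.rpow_pos_of_pos hρ0 _
    have hx0 : (0:ℝ) < ρ^d := Real.rpow_pos_of_pos hρ0 _
    have hxx : ρ^d * ρ^d ≤ 2*(ρ^d * ρ^d - ρ^d) := auxXX h2d
    have hkey : ρ ^ (-(1/2) + ε) * ρ^(2*d) ≤
        ρ ^ (-(1/2) + ε) * (2*(ρ^(2*d) - ρ^d)) := by
      rw [hsplit]
      exact mul_le_mul_of_nonneg_left hxx hX.le
    calc ((2*π) ^ (4:ℕ))⁻¹ * (∫ k in D, g k)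
        ≤ ((2*π) ^ (4:ℕ))⁻¹ * (48*π * (ρ ^ (-(1/2) + ε) * ρ^(2*d))) := by
          exact mul_le_mul_of_nonneg_left hchain hP.le
      _ ≤ ((2*π) ^ (4:ℕ))⁻¹ * (48*π * (ρ ^ (-(1/2) + ε) * (2*(ρ^(2*d) - ρ^d)))) := by
          refine mul_le_mul_of_nonneg_left (mul_le_mul_of_nonneg_left hkey (by positivity)) hP.le
      _ = C * ρ ^ (-(1/2) + ε) * (ρ^(2*d) - ρ^d) := by rw [hC]; ring
  · rw [integral_undef hg, mul_zero]
    have hexp_le : ρ ^ (1 / (2 * cVal ε * M)) ≤ ρ ^ (1 / (cVal ε * M)) := by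
      rw [hcexp1, hcexp2]
      exact Real.rpow_le_rpow_of_exponent_le hρ1 (by linarith)
    have : 0 ≤ ρ ^ (1 / (cVal ε * M)) - ρ ^ (1 / (2 * cVal ε * M)) := by linarith
    positivity
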